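/- arXiv:2204.02680 — 3 statements merged into one kernel-verified Lean document; each statement's English description precedes it below -/
import Mathlib

section
/- Let (Ω, 𝒜, P) be a probability space, 𝓕 ⊆ 𝒜 a sub-σ-algebra, τ : Ω → ℝ a random variable (a random time), and fix real numbers t < u. Let 𝓖 be the smallest σ-algebra containing 𝓕 and every event {τ ≤ s} with s ≤ t. Let X : Ω → ℝ be integrable, and assume that the conditional expectation E[1_{τ > t} | 𝓕] is almost surely strictly positive. Then, almost surely, E[X · 1_{τ > u} | 𝓖] = 1_{τ > t} · E[X · 1_{τ > u} | 𝓕] / E[1_{τ > t} | 𝓕]. -/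
open MeasureTheory ProbabilityTheory Set
open scoped ENNReal NNReal

/-- Lemma 5.1.2 of Bielecki–Rutkowski: reduction of a `𝒢`-conditional expectation to an
`𝓕`-conditional expectation, where `𝒢` is `𝓕` enlarged with the default events `{τ ≤ s}`,
`s ≤ t`. -/
theorem stmt_0 {Ω : Type*} (F : MeasurableSpace Ω) (G : MeasurableSpace Ω) [mΩ : MeasurableSpace Ω] (P : Measure Ω) [IsProbabilityMeasure P]
    (hF : F ≤ mΩ)
    (τ : Ω → ℝ) (hτ : Measurable τ) (t u : ℝ) (htu : t < u)
    (hG : G = F ⊔ MeasurableSpace.generateFrom {A : Set Ω | ∃ s ≤ t, A = {ω | τ ω ≤ s}})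
    (X : Ω → ℝ) (hX : Integrable X P)
    (hpos : ∀ᵐ ω ∂P,
      0 < (P[Set.indicator {ω | t < τ ω} (fun _ => (1 : ℝ)) | F]) ω) :
    P[fun ω => X ω * Set.indicator {ω' | u < τ ω'} (fun _ => (1 : ℝ)) ω | G]
      =ᵐ[P] fun ω =>
        Set.indicator {ω' | t < τ ω'} (fun _ => (1 : ℝ)) ω *
          (P[fun ω' => X ω' * Set.indicator {ω'' | u < τ ω''} (fun _ => (1 : ℝ)) ω' | F]) ω /
          (P[Set.indicator {ω' | t < τ ω'} (fun _ => (1 : ℝ)) | F]) ω := by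
  set D : Set Ω := {ω | t < τ ω} with hD_def
  set U : Set Ω := {ω | u < τ ω} with hU_def
  have hτ' : Measurable[mΩ] τ := hτ
  have hDm : MeasurableSet[mΩ] D := measurableSet_lt measurable_const hτ'
  have hUm : MeasurableSet[mΩ] U := measurableSet_lt measurable_const hτ'
  have hUD : U ⊆ D := fun ω h => lt_trans htu h
  set f : Ω → ℝ := fun ω => X ω * Set.indicator U (fun _ => (1 : ℝ)) ω with hf_def
  set indD : Ω → ℝ := Set.indicator D (fun _ => (1 : ℝ)) with hindD_def
  set W : Ω → ℝ := P[indD | F] with hW_def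
  set Z : Ω → ℝ := P[f | F] with hZ_def
  -- G ≤ mΩ
  have hGle : G ≤ mΩ := by
    rw [hG]
    refine sup_le hF (MeasurableSpace.generateFrom_le ?_)
    rintro A ⟨s, _, rfl⟩
    exact hτ measurableSet_Iic
  have hFG : F ≤ G := hG ▸ le_sup_left
  -- D is G-measurable
  have hDG : MeasurableSet[G] D := by
    have h1 : MeasurableSet[G] {ω | τ ω ≤ t} := by
      rw [hG]
      exact (le_sup_right : _ ≤ F ⊔ _) _
        (MeasurableSpace.measurableSet_generateFrom ⟨t, le_rfl, rfl⟩)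
    have h2 : D = {ω | τ ω ≤ t}ᶜ := by ext ω; simp [hD_def, not_le]
    rw [h2]; exact h1.compl
  -- key structural lemma for G-sets
  have key : ∀ A : Set Ω, MeasurableSet[G] A →
      ∃ B : Set Ω, MeasurableSet[F] B ∧ A ∩ D = B ∩ D := by
    intro A hA
    let M : MeasurableSpace Ω :=
      { MeasurableSet' := fun A => ∃ B, MeasurableSet[F] B ∧ A ∩ D = B ∩ D
        measurableSet_empty := ⟨∅, @MeasurableSet.empty _ F, rfl⟩
        measurableSet_compl := by
          rintro A ⟨B, hB, hAB⟩
          refine ⟨Bᶜ, hB.compl, Set.ext fun ω => ?_⟩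
          have h := Set.ext_iff.mp hAB ω
          by_cases hω : ω ∈ D <;> simp [hω] at h ⊢ <;> tauto
        measurableSet_iUnion := by
          intro g hg
          choose B hB hBg using hg
          refine ⟨⋃ n, B n, MeasurableSet.iUnion hB, ?_⟩
          rw [Set.iUnion_inter, Set.iUnion_inter]
          exact Set.iUnion_congr hBg }
    have hGM : G ≤ M := by
      rw [hG]
      refine sup_le (fun A hA => ⟨A, hA, rfl⟩) (MeasurableSpace.generateFrom_le ?_)
      rintro A ⟨s, hs, rfl⟩
      refine ⟨∅, @MeasurableSet.empty _ F, ?_⟩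
      ext ω
      simp only [Set.mem_inter_iff, Set.mem_setOf_eq, Set.empty_inter,
        Set.mem_empty_iff_false, iff_false, not_and, hD_def]
      intro h1 h2
      exact absurd h1 (not_le.mpr (lt_of_le_of_lt hs h2))
    exact hGM A hA
  -- basic integrability
  letI : MeasurableSpace Ω := mΩ
  have hf_eq : f = U.indicator X := funext fun ω => by
    by_cases h : ω ∈ U <;> simp [hf_def, Set.indicator, h]
  have hf_int : Integrable f P := by rw [hf_eq]; exact hX.indicator hUm
  have hindD_int : Integrable indD P := (integrable_const (μ := P) (1 : ℝ)).indicator hDm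
  haveI hSF : SigmaFinite (P.trim hF) := inferInstance
  haveI hSG : SigmaFinite (P.trim hGle) := inferInstance
  have hW_sm : StronglyMeasurable[F] W := stronglyMeasurable_condExp
  have hZ_sm : StronglyMeasurable[F] Z := stronglyMeasurable_condExp
  have hW_meas : Measurable[F] W := hW_sm.measurable
  have hZ_meas : Measurable[F] Z := hZ_sm.measurable
  have hW_int : Integrable W P := integrable_condExp
  have hZ_int : Integrable Z P := integrable_condExp
  have hWnn : 0 ≤ᵐ[P] W :=
    condExp_nonneg (Filter.Eventually.of_forall fun ω =>
      Set.indicator_nonneg (fun _ _ => zero_le_one) ω)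
  -- density of the trimmed restricted measure
  set w : Ω → ℝ≥0 := fun ω => Real.toNNReal (W ω) with hw_def
  have hw_meas : Measurable[F] w := hW_meas.real_toNNReal
  have hw_meas' : Measurable[F] (fun ω => (w ω : ℝ≥0∞)) :=
    measurable_coe_nnreal_ennreal.comp hw_meas
  have hν : (P.restrict D).trim hF
      = (P.trim hF).withDensity (fun ω => (w ω : ℝ≥0∞)) := by
    refine @Measure.ext Ω F _ _ fun B hB => ?_
    have hBm : MeasurableSet[mΩ] B := hF _ hB
    rw [trim_measurableSet_eq hF hB, Measure.restrict_apply hBm,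
      withDensity_apply _ hB, restrict_trim hF P hB, lintegral_trim hF hw_meas']
    have h1 : ∫ a in B, W a ∂P = (P (B ∩ D)).toReal := by
      rw [hW_def, setIntegral_condExp hF hindD_int hB, hindD_def,
        integral_indicator hDm]
      rw [setIntegral_const, measureReal_restrict_apply hDm]
      simp [Set.inter_comm, measureReal_def]
    calc P (B ∩ D) = ENNReal.ofReal ((P (B ∩ D)).toReal) :=
          (ENNReal.ofReal_toReal (measure_ne_top _ _)).symm
      _ = ENNReal.ofReal (∫ a in B, W a ∂P) := by rw [h1]
      _ = ∫⁻ a in B, ENNReal.ofReal (W a) ∂P :=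
          ofReal_integral_eq_lintegral_ofReal hW_int.integrableOn
            (ae_restrict_of_ae hWnn)
      _ = ∫⁻ a in B, (w a : ℝ≥0∞) ∂P := by
          simp only [hw_def, ENNReal.ofReal]
  -- the candidate function
  set g0 : Ω → ℝ := fun ω => Z ω / W ω with hg0_def
  have hg0F : Measurable[F] g0 := hZ_meas.div hW_meas
  have hg0nn : Measurable[F] (fun ω => (‖g0 ω‖₊ : ℝ≥0∞)) := by letI := F; exact measurable_coe_nnreal_ennreal.comp hg0F.nnnorm
  -- integrability of the candidate
  have hY_int : Integrable (D.indicator g0) P := by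
    refine ⟨((hg0F.mono hF le_rfl).indicator hDm).aestronglyMeasurable, ?_⟩
    show (∫⁻ ω, (‖D.indicator g0 ω‖₊ : ℝ≥0∞) ∂P) < ⊤
    calc ∫⁻ ω, (‖D.indicator g0 ω‖₊ : ℝ≥0∞) ∂P
        = ∫⁻ ω, D.indicator (fun ω => (‖g0 ω‖₊ : ℝ≥0∞)) ω ∂P := by
          congr 1; funext ω; by_cases h : ω ∈ D <;> simp [h]
      _ = ∫⁻ ω in D, (‖g0 ω‖₊ : ℝ≥0∞) ∂P := lintegral_indicator hDm _
      _ = ∫⁻ ω, (‖g0 ω‖₊ : ℝ≥0∞) ∂((P.restrict D).trim hF) :=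
          (lintegral_trim hF hg0nn).symm
      _ = ∫⁻ ω, (w ω : ℝ≥0∞) * (‖g0 ω‖₊ : ℝ≥0∞) ∂(P.trim hF) := by
          rw [hν, lintegral_withDensity_eq_lintegral_mul _ hw_meas' hg0nn]
          rfl
      _ = ∫⁻ ω, (w ω : ℝ≥0∞) * (‖g0 ω‖₊ : ℝ≥0∞) ∂P :=
          lintegral_trim hF (hw_meas'.mul hg0nn)
      _ = ∫⁻ ω, (‖Z ω‖₊ : ℝ≥0∞) ∂P := by
          refine lintegral_congr_ae (hpos.mono fun ω hω => ?_)
          show (w ω : ℝ≥0∞) * (‖g0 ω‖₊ : ℝ≥0∞) = (‖Z ω‖₊ : ℝ≥0∞)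
          have hcoe : (w ω : ℝ≥0∞) = ENNReal.ofReal (W ω) := rfl
          rw [hcoe, ← enorm_eq_nnnorm, ← enorm_eq_nnnorm, Real.enorm_eq_ofReal_abs, Real.enorm_eq_ofReal_abs,
            ← ENNReal.ofReal_mul hω.le]
          congr 1
          rw [hg0_def]
          rw [abs_div, abs_of_pos hω, mul_comm, div_mul_cancel₀ _ hω.ne']
      _ < ⊤ := hZ_int.2
  -- set-integral identity over F-sets
  have hsetg0 : ∀ B : Set Ω, MeasurableSet[F] B →
      ∫ ω in B, D.indicator g0 ω ∂P = ∫ ω in B, f ω ∂P := by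
    intro B hB
    have hBm : MeasurableSet[mΩ] B := hF _ hB
    have hg0_sm : StronglyMeasurable[F] g0 := hg0F.stronglyMeasurable
    have hwg0_sm : StronglyMeasurable[F] (fun ω => (w ω : ℝ) * g0 ω) :=
      ((measurable_coe_nnreal_real.comp hw_meas).mul hg0F).stronglyMeasurable
    have e1 : ∫ ω in B, D.indicator g0 ω ∂P = ∫ ω, g0 ω ∂((P.restrict D).restrict B) := by
      rw [setIntegral_indicator hDm, Measure.restrict_restrict hBm]
    have e2 : ∫ ω, g0 ω ∂((P.restrict D).restrict B)
        = ∫ ω in B, (w ω : ℝ) * g0 ω ∂(P.trim hF) := by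
      letI := F
      have hrw : ((P.trim hF).withDensity (fun ω => (w ω : ℝ≥0∞))).restrict B
          = ((P.trim hF).restrict B).withDensity (fun ω => (w ω : ℝ≥0∞)) :=
        @restrict_withDensity Ω F (P.trim hF) B hB (fun ω => (w ω : ℝ≥0∞))
      rw [integral_trim hF hg0_sm, ← restrict_trim hF (P.restrict D) hB, hν,
        hrw, integral_withDensity_eq_integral_smul (μ := (P.trim hF).restrict B) hw_meas g0]
      simp_rw [NNReal.smul_def, smul_eq_mul]
    have e3 : ∫ ω in B, (w ω : ℝ) * g0 ω ∂(P.trim hF)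
        = ∫ ω in B, (w ω : ℝ) * g0 ω ∂P := by
      rw [restrict_trim hF P hB, ← integral_trim hF hwg0_sm]
    have e4 : ∫ ω in B, (w ω : ℝ) * g0 ω ∂P = ∫ ω in B, Z ω ∂P := by
      refine integral_congr_ae (ae_restrict_of_ae (hpos.mono fun ω hω => ?_))
      show (w ω : ℝ) * g0 ω = Z ω
      have hcoe : (w ω : ℝ) = W ω := Real.coe_toNNReal _ hω.le
      rw [hcoe, hg0_def, mul_comm, div_mul_cancel₀ _ hω.ne']
    have e5 : ∫ ω in B, Z ω ∂P = ∫ ω in B, f ω ∂P := by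
      rw [hZ_def, setIntegral_condExp hF hf_int hB]
    rw [e1, e2, e3, e4, e5]
  -- conclusion
  have hY_eq : (fun ω => indD ω * Z ω / W ω) = D.indicator g0 := funext fun ω => by
    by_cases h : ω ∈ D <;> simp [hindD_def, hg0_def, Set.indicator, h]
  rw [hY_eq]
  refine (ae_eq_condExp_of_forall_setIntegral_eq hGle hf_int
    (fun s _ _ => hY_int.integrableOn) (fun A hA _ => ?_) ?_).symm
  · obtain ⟨B, hB, hAB⟩ := key A hA
    have eA : ∫ ω in A, D.indicator g0 ω ∂P = ∫ ω in B, D.indicator g0 ω ∂P := by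
      rw [setIntegral_indicator hDm, setIntegral_indicator hDm, hAB]
    have hUAB : A ∩ U = B ∩ U := by
      ext ω
      have h := Set.ext_iff.mp hAB ω
      simp only [Set.mem_inter_iff] at h ⊢
      constructor
      · rintro ⟨ha, hU⟩; exact ⟨(h.mp ⟨ha, hUD hU⟩).1, hU⟩
      · rintro ⟨hb, hU⟩; exact ⟨(h.mpr ⟨hb, hUD hU⟩).1, hU⟩
    have ef : ∫ ω in A, f ω ∂P = ∫ ω in B, f ω ∂P := by
      rw [hf_eq, setIntegral_indicator hUm, setIntegral_indicator hUm, hUAB]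
    rw [eA, hsetg0 B hB, ← ef]
  · exact StronglyMeasurable.aestronglyMeasurable
      (Measurable.stronglyMeasurable ((hg0F.mono hFG le_rfl).indicator hDG))
end

section
/- Let (Ω, 𝒜, P) be a probability space, 𝓗 ⊆ 𝒜 a sub-σ-algebra, and Λ₁, Λ₂ : Ω → [0,∞) 𝓗-measurable random variables. Let E₁, E₂ be unit exponential random variables that are independent of each other, and such that the σ-algebra generated by the pair (E₁, E₂) is independent of 𝓗. Then for every sub-σ-algebra 𝓖 ⊆ 𝓗, almost surely E[1_{Λ₁ < E₁} · 1_{Λ₂ < E₂} | 𝓖] = E[exp(−(Λ₁ + Λ₂)) | 𝓖]. -/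
open MeasureTheory ProbabilityTheory Set

/-- Joint-survival formula for two Cox default times: if `Λ₁, Λ₂` are `𝓗`-measurable and the
unit exponential triggers `E₁, E₂` are independent of each other with the pair `(E₁, E₂)`
independent of `𝓗`, then for every sub-σ-algebra `𝓖 ⊆ 𝓗`,
`E[1_{Λ₁ < E₁}·1_{Λ₂ < E₂} | 𝓖] = E[exp (−(Λ₁ + Λ₂)) | 𝓖]` almost surely. -/
theorem stmt_2 {Ω : Type*} (H : MeasurableSpace Ω) (G : MeasurableSpace Ω) [mΩ : MeasurableSpace Ω] (P : Measure Ω) [IsProbabilityMeasure P]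
    (hH : H ≤ mΩ)
    (Λ₁ Λ₂ : Ω → ℝ) (hΛ₁meas : Measurable[H] Λ₁) (hΛ₂meas : Measurable[H] Λ₂)
    (hΛ₁0 : ∀ ω, 0 ≤ Λ₁ ω) (hΛ₂0 : ∀ ω, 0 ≤ Λ₂ ω)
    (E₁ E₂ : Ω → ℝ) (hE₁meas : Measurable E₁) (hE₂meas : Measurable E₂)
    (hE₁0 : ∀ ω, 0 ≤ E₁ ω) (hE₂0 : ∀ ω, 0 ≤ E₂ ω)
    (hExp₁ : ∀ x : ℝ, 0 ≤ x → P {ω | x < E₁ ω} = ENNReal.ofReal (Real.exp (-x)))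
    (hExp₂ : ∀ x : ℝ, 0 ≤ x → P {ω | x < E₂ ω} = ENNReal.ofReal (Real.exp (-x)))
    (hE₁₂ : IndepFun E₁ E₂ P)
    (hIndep : Indep
      (MeasurableSpace.comap (fun ω => (E₁ ω, E₂ ω)) Prod.instMeasurableSpace) H P)
    (hG : G ≤ H) :
    P[fun ω => Set.indicator {ω' | Λ₁ ω' < E₁ ω'} (fun _ => (1 : ℝ)) ω *
        Set.indicator {ω' | Λ₂ ω' < E₂ ω'} (fun _ => (1 : ℝ)) ω | G]
      =ᵐ[P] P[fun ω => Real.exp (-(Λ₁ ω + Λ₂ ω)) | G] := by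
  letI : MeasurableSpace Ω := mΩ
  have hΛ₁m : Measurable[mΩ] Λ₁ := hΛ₁meas.mono hH le_rfl
  have hE₁m : Measurable[mΩ] E₁ := hE₁meas
  have hE₂m : Measurable[mΩ] E₂ := hE₂meas
  have hΛ₂m : Measurable[mΩ] Λ₂ := hΛ₂meas.mono hH le_rfl
  set A : Set Ω := {ω | Λ₁ ω < E₁ ω} ∩ {ω | Λ₂ ω < E₂ ω} with hA_def
  have hA : MeasurableSet[mΩ] A :=
    (measurableSet_lt hΛ₁m hE₁m).inter (measurableSet_lt hΛ₂m hE₂m)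
  have hfA : (fun ω => Set.indicator {ω' | Λ₁ ω' < E₁ ω'} (fun _ => (1 : ℝ)) ω *
      Set.indicator {ω' | Λ₂ ω' < E₂ ω'} (fun _ => (1 : ℝ)) ω)
      = A.indicator (fun _ => (1 : ℝ)) := by
    funext ω
    by_cases h1 : Λ₁ ω < E₁ ω <;> by_cases h2 : Λ₂ ω < E₂ ω <;>
      simp [A, Set.indicator_apply, h1, h2]
  set g : Ω → ℝ := fun ω => Real.exp (-(Λ₁ ω + Λ₂ ω)) with hg_def
  have hgH : Measurable[H] g := Real.measurable_exp.comp (hΛ₁meas.add hΛ₂meas).neg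
  have hgm : Measurable[mΩ] g := hgH.mono hH le_rfl
  have hg0 : ∀ ω, 0 ≤ g ω := fun ω => (Real.exp_pos _).le
  have hg1 : ∀ ω, g ω ≤ 1 := by
    intro ω
    rw [hg_def]
    exact Real.exp_le_one_iff.mpr (by nlinarith [hΛ₁0 ω, hΛ₂0 ω])
  have hgint : Integrable g P := by
    refine Integrable.mono' (integrable_const (1 : ℝ)) hgm.aestronglyMeasurable ?_
    filter_upwards with ω
    rw [Real.norm_eq_abs, abs_of_nonneg (hg0 ω)]
    exact hg1 ω
  have hfint : Integrable (A.indicator fun _ => (1 : ℝ)) P :=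
    (integrable_const (1 : ℝ)).indicator hA
  haveI : IsFiniteMeasure (P.trim hH) := by
    constructor
    rw [trim_measurableSet_eq hH MeasurableSet.univ]
    exact measure_lt_top P univ
  -- the key measure computation
  have key : ∀ s : Set Ω, MeasurableSet[H] s →
      P (A ∩ s) = ∫⁻ ω in s, ENNReal.ofReal (g ω) ∂P := by
    intro s hs
    have hs' : MeasurableSet[mΩ] s := hH s hs
    set χ : Ω → ℝ := s.indicator (fun _ => (1 : ℝ)) with hχ_def
    set X : Ω → ℝ × ℝ := fun ω => (E₁ ω, E₂ ω) with hX_def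
    set Y : Ω → ℝ × ℝ × ℝ := fun ω => (Λ₁ ω, Λ₂ ω, χ ω) with hY_def
    have hXm : Measurable[mΩ] X := hE₁m.prodMk hE₂m
    have hYH : Measurable[H] Y :=
      hΛ₁meas.prodMk (hΛ₂meas.prodMk ((measurable_const : Measurable[H] fun _ : Ω => (1 : ℝ)).indicator hs))
    have hYm : Measurable[mΩ] Y := hYH.mono hH le_rfl
    have hind : IndepFun X Y P := indep_of_indep_of_le_right hIndep hYH.comap_le
    have hmap : P.map (fun ω => (X ω, Y ω)) = (P.map X).prod (P.map Y) :=
      (indepFun_iff_map_prod_eq_prod_map_map hXm.aemeasurable hYm.aemeasurable).mp hind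
    set C : Set ((ℝ × ℝ) × ℝ × ℝ × ℝ) :=
      {p | p.2.1 < p.1.1 ∧ p.2.2.1 < p.1.2 ∧ p.2.2.2 = 1} with hC_def
    have hC : MeasurableSet C := by
      have h1 : MeasurableSet {p : (ℝ × ℝ) × ℝ × ℝ × ℝ | p.2.1 < p.1.1} :=
        measurableSet_lt (measurable_fst.comp measurable_snd)
          (measurable_fst.comp measurable_fst)
      have h2 : MeasurableSet {p : (ℝ × ℝ) × ℝ × ℝ × ℝ | p.2.2.1 < p.1.2} :=
        measurableSet_lt (measurable_fst.comp (measurable_snd.comp measurable_snd))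
          (measurable_snd.comp measurable_fst)
      have h3 : MeasurableSet {p : (ℝ × ℝ) × ℝ × ℝ × ℝ | p.2.2.2 = 1} :=
        (measurable_snd.comp (measurable_snd.comp measurable_snd))
          (measurableSet_singleton (1 : ℝ))
      exact h1.inter (h2.inter h3)
    have hpre : A ∩ s = (fun ω => (X ω, Y ω)) ⁻¹' C := by
      ext ω
      by_cases hω : ω ∈ s <;>
        simp [A, C, X, Y, χ, Set.indicator_apply, hω, and_assoc]
    have hrect : ∀ a b : ℝ, 0 ≤ a → 0 ≤ b →
        (P.map X) (Ioi a ×ˢ Ioi b) = ENNReal.ofReal (Real.exp (-(a + b))) := by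
      intro a b ha hb
      rw [Measure.map_apply hXm (measurableSet_Ioi.prod measurableSet_Ioi)]
      have hXpre : X ⁻¹' (Ioi a ×ˢ Ioi b) = E₁ ⁻¹' Ioi a ∩ E₂ ⁻¹' Ioi b := rfl
      rw [hXpre, hE₁₂.measure_inter_preimage_eq_mul _ _ measurableSet_Ioi measurableSet_Ioi]
      have h1 : E₁ ⁻¹' Ioi a = {ω | a < E₁ ω} := rfl
      have h2 : E₂ ⁻¹' Ioi b = {ω | b < E₂ ω} := rfl
      rw [h1, h2, hExp₁ a ha, hExp₂ b hb,
        ← ENNReal.ofReal_mul (Real.exp_nonneg _), ← Real.exp_add]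
      ring_nf
    calc P (A ∩ s) = (P.map (fun ω => (X ω, Y ω))) C := by
          rw [Measure.map_apply (hXm.prodMk hYm) hC, hpre]
      _ = ((P.map X).prod (P.map Y)) C := by rw [hmap]
      _ = ∫⁻ y, (P.map X) ((fun x => (x, y)) ⁻¹' C) ∂(P.map Y) :=
          Measure.prod_apply_symm hC
      _ = ∫⁻ ω, (P.map X) ((fun x => (x, Y ω)) ⁻¹' C) ∂P :=
          lintegral_map (measurable_measure_prodMk_right hC) hYm
      _ = ∫⁻ ω, s.indicator (fun ω' => ENNReal.ofReal (g ω')) ω ∂P := by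
          refine lintegral_congr fun ω => ?_
          by_cases hω : ω ∈ s
          · have hCeq : (fun x => (x, Y ω)) ⁻¹' C = Ioi (Λ₁ ω) ×ˢ Ioi (Λ₂ ω) := by
              ext x
              simp [C, Y, χ, Set.indicator_of_mem hω, Set.mem_prod, and_comm]
            rw [hCeq, hrect _ _ (hΛ₁0 ω) (hΛ₂0 ω), Set.indicator_of_mem hω]
          · have hCeq : (fun x => (x, Y ω)) ⁻¹' C = (∅ : Set (ℝ × ℝ)) := by
              ext x
              simp [C, Y, χ, Set.indicator_of_notMem hω]
            rw [hCeq, measure_empty, Set.indicator_of_notMem hω]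
      _ = ∫⁻ ω in s, ENNReal.ofReal (g ω) ∂P := lintegral_indicator hs' _
  -- conditional expectation over H
  have hcond : g =ᵐ[P] P[A.indicator (fun _ => (1 : ℝ)) | H] := by
    refine ae_eq_condExp_of_forall_setIntegral_eq hH hfint
      (fun s _ _ => hgint.integrableOn) (fun s hs _ => ?_)
      (StronglyMeasurable.aestronglyMeasurable hgH.stronglyMeasurable)
    have hs' : MeasurableSet[mΩ] s := hH s hs
    have hRHS : ∫ x in s, A.indicator (fun _ => (1 : ℝ)) x ∂P = (P (A ∩ s)).toReal := by
      rw [setIntegral_indicator hA, Set.inter_comm, setIntegral_const, smul_eq_mul, mul_one, Measure.real]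
    have hLHS : ∫ x in s, g x ∂P = (∫⁻ x in s, ENNReal.ofReal (g x) ∂P).toReal := by
      rw [integral_eq_lintegral_of_nonneg_ae (Filter.Eventually.of_forall fun ω => hg0 ω)
        hgm.aestronglyMeasurable.restrict]
    rw [hRHS, hLHS, key s hs]
  rw [hfA]
  exact (condExp_condExp_of_le hG hH).symm.trans (condExp_congr_ae hcond.symm)
end

section
/- Let Ω be a standard Borel probability space with probability measure P and σ-algebra 𝒜, let 𝓖 ⊆ 𝓗 ⊆ 𝒜 be sub-σ-algebras, and let Λ₁, Λ₂ : Ω → [0,∞) be 𝓗-measurable random variables that are conditionally independent given 𝓖. Let E₁, E₂ be unit exponential random variables that are independent of each other, and such that the σ-algebra generated by the pair (E₁, E₂) is independent of 𝓗. Then almost surely E[1_{Λ₁ < E₁} · 1_{Λ₂ < E₂} | 𝓖] = E[exp(−Λ₁) | 𝓖] · E[exp(−Λ₂) | 𝓖]. -/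
open MeasureTheory ProbabilityTheory Set


lemma aux_ae_indepFun {Ω : Type*} (G : MeasurableSpace Ω)
    [mΩ : MeasurableSpace Ω] [StandardBorelSpace Ω]
    (P : Measure Ω) [IsProbabilityMeasure P] (hG : G ≤ mΩ)
    (Λ₁ Λ₂ : Ω → ℝ) (hΛ₁ : Measurable Λ₁) (hΛ₂ : Measurable Λ₂)
    (h : CondIndepFun G hG Λ₁ Λ₂ P) :
    ∀ᵐ ω ∂P, IndepFun Λ₁ Λ₂ (condExpKernel P G ω) := by
  have h' : ∀ s t : Set ℝ, MeasurableSet s → MeasurableSet t →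
      ∀ᵐ ω ∂P, condExpKernel P G ω (Λ₁ ⁻¹' s ∩ Λ₂ ⁻¹' t)
        = condExpKernel P G ω (Λ₁ ⁻¹' s) * condExpKernel P G ω (Λ₂ ⁻¹' t) := by
    intro s t hs ht
    exact ae_of_ae_trim hG
      ((Kernel.indepFun_iff_measure_inter_preimage_eq_mul.mp h) s t hs ht)
  have hQ : ∀ᵐ ω ∂P, ∀ q r : ℚ,
      condExpKernel P G ω (Λ₁ ⁻¹' Iic (q : ℝ) ∩ Λ₂ ⁻¹' Iic (r : ℝ))
        = condExpKernel P G ω (Λ₁ ⁻¹' Iic (q : ℝ)) * condExpKernel P G ω (Λ₂ ⁻¹' Iic (r : ℝ)) := by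
    rw [ae_all_iff]
    intro q
    rw [ae_all_iff]
    intro r
    exact h' _ _ measurableSet_Iic measurableSet_Iic
  filter_upwards [hQ] with ω hω
  have hgen : (Real.measurableSpace : MeasurableSpace ℝ) = .generateFrom (⋃ q : ℚ, {Iic (q : ℝ)}) := by
    rw [BorelSpace.measurable_eq (α := ℝ), Real.borel_eq_generateFrom_Iic_rat]
  have hp : IsPiSystem (⋃ q : ℚ, {Iic (q : ℝ)}) := by
    rintro s hs t ht -
    simp only [mem_iUnion, mem_singleton_iff] at hs ht ⊢
    obtain ⟨q, rfl⟩ := hs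
    obtain ⟨r, rfl⟩ := ht
    exact ⟨min q r, by rw [Iic_inter_Iic, Rat.cast_min]⟩
  have hp1 : IsPiSystem ((fun s => Λ₁ ⁻¹' s) '' (⋃ q : ℚ, {Iic (q : ℝ)})) :=
    hp.comap _
  have hp2 : IsPiSystem ((fun s => Λ₂ ⁻¹' s) '' (⋃ q : ℚ, {Iic (q : ℝ)})) :=
    hp.comap _
  have key : Indep (MeasurableSpace.comap Λ₁ Real.measurableSpace)
      (MeasurableSpace.comap Λ₂ Real.measurableSpace) (condExpKernel P G ω) := by
    rw [hgen, MeasurableSpace.comap_generateFrom, MeasurableSpace.comap_generateFrom]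
    refine IndepSets.indep' ?_ ?_ hp1 hp2 ?_
    · rintro _ ⟨s, hs, rfl⟩
      simp only [mem_iUnion, mem_singleton_iff] at hs
      obtain ⟨q, rfl⟩ := hs
      exact hΛ₁ measurableSet_Iic
    · rintro _ ⟨s, hs, rfl⟩
      simp only [mem_iUnion, mem_singleton_iff] at hs
      obtain ⟨q, rfl⟩ := hs
      exact hΛ₂ measurableSet_Iic
    · rintro _ _ ⟨s, hs, rfl⟩ ⟨t, ht, rfl⟩
      simp only [mem_iUnion, mem_singleton_iff] at hs ht
      obtain ⟨q, rfl⟩ := hs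
      obtain ⟨r, rfl⟩ := ht
      exact Filter.Eventually.of_forall fun _ => hω q r
  exact key


lemma aux_freeze {Ω : Type*} (H : MeasurableSpace Ω) [mΩ : MeasurableSpace Ω]
    (P : Measure Ω) [IsProbabilityMeasure P] (hH : H ≤ mΩ)
    (Λ₁ Λ₂ : Ω → ℝ) (hΛ₁meas : Measurable[H] Λ₁) (hΛ₂meas : Measurable[H] Λ₂)
    (hΛ₁0 : ∀ ω, 0 ≤ Λ₁ ω) (hΛ₂0 : ∀ ω, 0 ≤ Λ₂ ω)
    (E₁ E₂ : Ω → ℝ) (hE₁meas : Measurable E₁) (hE₂meas : Measurable E₂)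
    (hExp₁ : ∀ x : ℝ, 0 ≤ x → P {ω | x < E₁ ω} = ENNReal.ofReal (Real.exp (-x)))
    (hExp₂ : ∀ x : ℝ, 0 ≤ x → P {ω | x < E₂ ω} = ENNReal.ofReal (Real.exp (-x)))
    (hE₁₂ : IndepFun E₁ E₂ P)
    (hIndep : Indep
      (MeasurableSpace.comap (fun ω => (E₁ ω, E₂ ω)) Prod.instMeasurableSpace) H P)
    (s : Set Ω) (hs : MeasurableSet[H] s) :
    P (s ∩ ({ω | Λ₁ ω < E₁ ω} ∩ {ω | Λ₂ ω < E₂ ω}))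
      = ∫⁻ ω in s, ENNReal.ofReal (Real.exp (-Λ₁ ω)) * ENNReal.ofReal (Real.exp (-Λ₂ ω)) ∂P := by
  have hpair : Measurable (fun ω => (E₁ ω, E₂ ω)) := hE₁meas.prodMk hE₂meas
  have hid : @Measurable Ω Ω mΩ H id := measurable_id'' hH
  have h1 : @IndepFun Ω Ω (ℝ × ℝ) mΩ H _ id (fun ω => (E₁ ω, E₂ ω)) P := by
    show Indep (MeasurableSpace.comap id H) (MeasurableSpace.comap (fun ω => (E₁ ω, E₂ ω)) _) P
    rw [MeasurableSpace.comap_id]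
    exact hIndep.symm
  have haem : @AEMeasurable Ω Ω H mΩ id P := @Measurable.aemeasurable Ω Ω mΩ H id P hid
  have hprod := (indepFun_iff_map_prod_eq_prod_map_map haem hpair.aemeasurable).mp h1
  have hfst : @Measurable (Ω × ℝ × ℝ) Ω (@Prod.instMeasurableSpace Ω (ℝ × ℝ) H _) H Prod.fst :=
    @measurable_fst Ω (ℝ × ℝ) H _
  have hsnd : @Measurable (Ω × ℝ × ℝ) (ℝ × ℝ) (@Prod.instMeasurableSpace Ω (ℝ × ℝ) H _) _
      Prod.snd := @measurable_snd Ω (ℝ × ℝ) H _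
  have hC : MeasurableSet[@Prod.instMeasurableSpace Ω (ℝ × ℝ) H _]
      ((Prod.fst ⁻¹' s) ∩ ({p : Ω × ℝ × ℝ | Λ₁ p.1 < p.2.1} ∩ {p | Λ₂ p.1 < p.2.2})) := by
    refine (hfst hs).inter (MeasurableSet.inter ?_ ?_)
    · exact measurableSet_lt (hΛ₁meas.comp hfst) (measurable_fst.comp hsnd)
    · exact measurableSet_lt (hΛ₂meas.comp hfst) (measurable_snd.comp hsnd)
  have hψ : @Measurable Ω (Ω × ℝ × ℝ) mΩ (@Prod.instMeasurableSpace Ω (ℝ × ℝ) H _)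
      (fun ω => (id ω, (E₁ ω, E₂ ω))) := Measurable.prodMk hid hpair
  have hset : s ∩ ({ω | Λ₁ ω < E₁ ω} ∩ {ω | Λ₂ ω < E₂ ω})
      = (fun ω => (id ω, (E₁ ω, E₂ ω))) ⁻¹'
        ((Prod.fst ⁻¹' s) ∩ ({p : Ω × ℝ × ℝ | Λ₁ p.1 < p.2.1} ∩ {p | Λ₂ p.1 < p.2.2})) := rfl
  haveI : IsProbabilityMeasure (P.map (fun ω => (E₁ ω, E₂ ω))) :=
    Measure.isProbabilityMeasure_map hpair.aemeasurable
  haveI : IsProbabilityMeasure (@Measure.map Ω Ω mΩ H id P) :=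
    @Measure.isProbabilityMeasure_map Ω Ω mΩ H P _ id haem
  rw [hset, ← Measure.map_apply hψ hC, hprod,
    @Measure.prod_apply Ω (ℝ × ℝ) H _ (@Measure.map Ω Ω mΩ H id P)
      (P.map (fun ω => (E₁ ω, E₂ ω))) _ _ hC]
  have hslice : ∀ ω : Ω, (P.map (fun ω => (E₁ ω, E₂ ω)))
        (Prod.mk ω ⁻¹' ((Prod.fst ⁻¹' s) ∩
          ({p : Ω × ℝ × ℝ | Λ₁ p.1 < p.2.1} ∩ {p | Λ₂ p.1 < p.2.2})))
      = s.indicator (fun ω => ENNReal.ofReal (Real.exp (-Λ₁ ω))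
          * ENNReal.ofReal (Real.exp (-Λ₂ ω))) ω := by
    intro ω
    by_cases hω : ω ∈ s
    · have hpre : Prod.mk ω ⁻¹' ((Prod.fst ⁻¹' s) ∩
          ({p : Ω × ℝ × ℝ | Λ₁ p.1 < p.2.1} ∩ {p | Λ₂ p.1 < p.2.2}))
          = Ioi (Λ₁ ω) ×ˢ Ioi (Λ₂ ω) := by
        ext x
        simp [hω, Set.mem_prod, mem_Ioi]
      rw [hpre, Measure.map_apply hpair (measurableSet_Ioi.prod measurableSet_Ioi)]
      have h2 : (fun ω => (E₁ ω, E₂ ω)) ⁻¹' (Ioi (Λ₁ ω) ×ˢ Ioi (Λ₂ ω))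
          = E₁ ⁻¹' Ioi (Λ₁ ω) ∩ E₂ ⁻¹' Ioi (Λ₂ ω) := rfl
      rw [h2, hE₁₂.measure_inter_preimage_eq_mul _ _ measurableSet_Ioi measurableSet_Ioi]
      have e1 : E₁ ⁻¹' Ioi (Λ₁ ω) = {ω' | Λ₁ ω < E₁ ω'} := rfl
      have e2 : E₂ ⁻¹' Ioi (Λ₂ ω) = {ω' | Λ₂ ω < E₂ ω'} := rfl
      rw [e1, e2, hExp₁ _ (hΛ₁0 ω), hExp₂ _ (hΛ₂0 ω), Set.indicator_of_mem hω]
    · have hpre : Prod.mk ω ⁻¹' ((Prod.fst ⁻¹' s) ∩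
          ({p : Ω × ℝ × ℝ | Λ₁ p.1 < p.2.1} ∩ {p | Λ₂ p.1 < p.2.2})) = ∅ := by
        ext x
        simp [hω]
      rw [hpre, Set.indicator_of_notMem hω]
      simp
  rw [lintegral_congr hslice]
  have hmeasF : Measurable[H] (s.indicator (fun ω => ENNReal.ofReal (Real.exp (-Λ₁ ω))
      * ENNReal.ofReal (Real.exp (-Λ₂ ω)))) := by
    refine Measurable.indicator ?_ hs
    exact ((ENNReal.measurable_ofReal.comp (Real.measurable_exp.comp (hΛ₁meas.neg))).mul
      (ENNReal.measurable_ofReal.comp (Real.measurable_exp.comp (hΛ₂meas.neg))))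
  rw [@lintegral_map Ω Ω mΩ H P _ _ hmeasF hid]
  simp only [id_eq]
  rw [lintegral_indicator (hH s hs)]

lemma aux_condexp_H {Ω : Type*} (H : MeasurableSpace Ω) [mΩ : MeasurableSpace Ω]
    (P : Measure Ω) [IsProbabilityMeasure P] (hH : H ≤ mΩ)
    (Λ₁ Λ₂ : Ω → ℝ) (hΛ₁meas : Measurable[H] Λ₁) (hΛ₂meas : Measurable[H] Λ₂)
    (hΛ₁0 : ∀ ω, 0 ≤ Λ₁ ω) (hΛ₂0 : ∀ ω, 0 ≤ Λ₂ ω)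
    (E₁ E₂ : Ω → ℝ) (hE₁meas : Measurable E₁) (hE₂meas : Measurable E₂)
    (hExp₁ : ∀ x : ℝ, 0 ≤ x → P {ω | x < E₁ ω} = ENNReal.ofReal (Real.exp (-x)))
    (hExp₂ : ∀ x : ℝ, 0 ≤ x → P {ω | x < E₂ ω} = ENNReal.ofReal (Real.exp (-x)))
    (hE₁₂ : IndepFun E₁ E₂ P)
    (hIndep : Indep
      (MeasurableSpace.comap (fun ω => (E₁ ω, E₂ ω)) Prod.instMeasurableSpace) H P) :
    (fun ω => Real.exp (-Λ₁ ω) * Real.exp (-Λ₂ ω)) =ᵐ[P]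
      P[fun ω => Set.indicator {ω' | Λ₁ ω' < E₁ ω'} (fun _ => (1 : ℝ)) ω *
        Set.indicator {ω' | Λ₂ ω' < E₂ ω'} (fun _ => (1 : ℝ)) ω | H] := by
  have hΛ₁m : Measurable Λ₁ := hΛ₁meas.mono hH le_rfl
  have hΛ₂m : Measurable Λ₂ := hΛ₂meas.mono hH le_rfl
  have hA₁ : MeasurableSet {ω | Λ₁ ω < E₁ ω} := measurableSet_lt hΛ₁m hE₁meas
  have hA₂ : MeasurableSet {ω | Λ₂ ω < E₂ ω} := measurableSet_lt hΛ₂m hE₂meas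
  have hfeq : (fun ω => Set.indicator {ω' | Λ₁ ω' < E₁ ω'} (fun _ => (1 : ℝ)) ω *
        Set.indicator {ω' | Λ₂ ω' < E₂ ω'} (fun _ => (1 : ℝ)) ω)
      = ({ω | Λ₁ ω < E₁ ω} ∩ {ω | Λ₂ ω < E₂ ω}).indicator (fun _ => (1 : ℝ)) := by
    funext ω
    by_cases h1 : ω ∈ {ω' | Λ₁ ω' < E₁ ω'} <;> by_cases h2 : ω ∈ {ω' | Λ₂ ω' < E₂ ω'} <;>
      simp [Set.indicator_apply, h1, h2, Set.mem_inter_iff]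
  have hgmeasH : Measurable[H] (fun ω => Real.exp (-Λ₁ ω) * Real.exp (-Λ₂ ω)) :=
    (Real.measurable_exp.comp hΛ₁meas.neg).mul (Real.measurable_exp.comp hΛ₂meas.neg)
  have hgmeas : Measurable (fun ω => Real.exp (-Λ₁ ω) * Real.exp (-Λ₂ ω)) :=
    (Real.measurable_exp.comp hΛ₁m.neg).mul (Real.measurable_exp.comp hΛ₂m.neg)
  have hgle : ∀ ω, ‖Real.exp (-Λ₁ ω) * Real.exp (-Λ₂ ω)‖ ≤ (1 : ℝ) := by
    intro ω
    have h1 : Real.exp (-Λ₁ ω) ≤ 1 := Real.exp_le_one_iff.mpr (neg_nonpos.mpr (hΛ₁0 ω))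
    have h2 : Real.exp (-Λ₂ ω) ≤ 1 := Real.exp_le_one_iff.mpr (neg_nonpos.mpr (hΛ₂0 ω))
    have h3 := Real.exp_pos (-Λ₁ ω)
    have h4 := Real.exp_pos (-Λ₂ ω)
    rw [Real.norm_eq_abs, abs_of_pos (by positivity)]
    nlinarith
  have hgint : Integrable (fun ω => Real.exp (-Λ₁ ω) * Real.exp (-Λ₂ ω)) P :=
    Integrable.mono' (integrable_const (1 : ℝ)) hgmeas.aestronglyMeasurable
      (Filter.Eventually.of_forall hgle)
  refine ae_eq_condExp_of_forall_setIntegral_eq hH ?_ (fun s _ _ => hgint.integrableOn)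
    (fun s hs _ => ?_) (StronglyMeasurable.aestronglyMeasurable hgmeasH.stronglyMeasurable)
  · rw [hfeq]
    exact (integrable_const (1 : ℝ)).indicator (hA₁.inter hA₂)
  · rw [hfeq]
    have hR : ∫ x in s, ({ω | Λ₁ ω < E₁ ω} ∩ {ω | Λ₂ ω < E₂ ω}).indicator
        (fun _ => (1 : ℝ)) x ∂P
        = (P (s ∩ ({ω | Λ₁ ω < E₁ ω} ∩ {ω | Λ₂ ω < E₂ ω}))).toReal := by
      rw [integral_indicator_const (1 : ℝ) (hA₁.inter hA₂),
        measureReal_restrict_apply (hA₁.inter hA₂), measureReal_def, Set.inter_comm, smul_eq_mul, mul_one]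
    rw [hR]
    have hL : ∫ x in s, Real.exp (-Λ₁ x) * Real.exp (-Λ₂ x) ∂P
        = (∫⁻ x in s, ENNReal.ofReal (Real.exp (-Λ₁ x) * Real.exp (-Λ₂ x)) ∂P).toReal := by
      rw [integral_eq_lintegral_of_nonneg_ae
        (Filter.Eventually.of_forall fun ω => by positivity)
        hgmeas.aestronglyMeasurable.restrict]
    rw [hL]
    congr 1
    rw [aux_freeze H P hH Λ₁ Λ₂ hΛ₁meas hΛ₂meas hΛ₁0 hΛ₂0 E₁ E₂ hE₁meas hE₂meas
      hExp₁ hExp₂ hE₁₂ hIndep s hs]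
    refine lintegral_congr fun ω => ?_
    rw [ENNReal.ofReal_mul (Real.exp_nonneg _)]

lemma aux_main {Ω : Type*} (G H : MeasurableSpace Ω)
    [mΩ : MeasurableSpace Ω] [StandardBorelSpace Ω]
    (P : Measure Ω) [IsProbabilityMeasure P]
    (hGH : G ≤ H) (hH : H ≤ mΩ) (hG : G ≤ mΩ)
    (Λ₁ Λ₂ : Ω → ℝ) (hΛ₁meas : Measurable[H] Λ₁) (hΛ₂meas : Measurable[H] Λ₂)
    (hΛ₁0 : ∀ ω, 0 ≤ Λ₁ ω) (hΛ₂0 : ∀ ω, 0 ≤ Λ₂ ω)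
    (hCondIndep : CondIndepFun G hG Λ₁ Λ₂ P)
    (E₁ E₂ : Ω → ℝ) (hE₁meas : Measurable E₁) (hE₂meas : Measurable E₂)
    (hE₁0 : ∀ ω, 0 ≤ E₁ ω) (hE₂0 : ∀ ω, 0 ≤ E₂ ω)
    (hExp₁ : ∀ x : ℝ, 0 ≤ x → P {ω | x < E₁ ω} = ENNReal.ofReal (Real.exp (-x)))
    (hExp₂ : ∀ x : ℝ, 0 ≤ x → P {ω | x < E₂ ω} = ENNReal.ofReal (Real.exp (-x)))
    (hE₁₂ : IndepFun E₁ E₂ P)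
    (hIndep : Indep
      (MeasurableSpace.comap (fun ω => (E₁ ω, E₂ ω)) Prod.instMeasurableSpace) H P) :
    P[fun ω => Set.indicator {ω' | Λ₁ ω' < E₁ ω'} (fun _ => (1 : ℝ)) ω *
        Set.indicator {ω' | Λ₂ ω' < E₂ ω'} (fun _ => (1 : ℝ)) ω | G]
      =ᵐ[P] fun ω =>
        (P[fun ω' => Real.exp (-Λ₁ ω') | G]) ω * (P[fun ω' => Real.exp (-Λ₂ ω') | G]) ω := by
  have hΛ₁m : Measurable Λ₁ := hΛ₁meas.mono hH le_rfl
  have hΛ₂m : Measurable Λ₂ := hΛ₂meas.mono hH le_rfl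
  have hgA := aux_condexp_H H P hH Λ₁ Λ₂ hΛ₁meas hΛ₂meas hΛ₁0 hΛ₂0 E₁ E₂ hE₁meas hE₂meas
    hExp₁ hExp₂ hE₁₂ hIndep
  have htower : P[fun ω => Set.indicator {ω' | Λ₁ ω' < E₁ ω'} (fun _ => (1 : ℝ)) ω *
        Set.indicator {ω' | Λ₂ ω' < E₂ ω'} (fun _ => (1 : ℝ)) ω | G]
      =ᵐ[P] P[fun ω => Real.exp (-Λ₁ ω) * Real.exp (-Λ₂ ω) | G] :=
    (condExp_condExp_of_le hGH hH).symm.trans (condExp_congr_ae hgA.symm)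
  -- integrability
  have hbd : ∀ (Λ : Ω → ℝ), Measurable Λ → (∀ ω, 0 ≤ Λ ω) →
      Integrable (fun ω => Real.exp (-Λ ω)) P := by
    intro Λ hm h0
    refine Integrable.mono' (integrable_const (1 : ℝ))
      ((Real.measurable_exp.comp hm.neg)).aestronglyMeasurable
      (Filter.Eventually.of_forall fun ω => ?_)
    rw [Real.norm_eq_abs, abs_of_pos (Real.exp_pos _)]
    exact Real.exp_le_one_iff.mpr (neg_nonpos.mpr (h0 ω))
  have h1int := hbd Λ₁ hΛ₁m hΛ₁0
  have h2int := hbd Λ₂ hΛ₂m hΛ₂0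
  have hgmeas : Measurable (fun ω => Real.exp (-Λ₁ ω) * Real.exp (-Λ₂ ω)) :=
    (Real.measurable_exp.comp hΛ₁m.neg).mul (Real.measurable_exp.comp hΛ₂m.neg)
  have hgint : Integrable (fun ω => Real.exp (-Λ₁ ω) * Real.exp (-Λ₂ ω)) P := by
    refine Integrable.mono' (integrable_const (1 : ℝ)) hgmeas.aestronglyMeasurable
      (Filter.Eventually.of_forall fun ω => ?_)
    have h1 : Real.exp (-Λ₁ ω) ≤ 1 := Real.exp_le_one_iff.mpr (neg_nonpos.mpr (hΛ₁0 ω))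
    have h2 : Real.exp (-Λ₂ ω) ≤ 1 := Real.exp_le_one_iff.mpr (neg_nonpos.mpr (hΛ₂0 ω))
    have h3 := Real.exp_pos (-Λ₁ ω)
    have h4 := Real.exp_pos (-Λ₂ ω)
    rw [Real.norm_eq_abs, abs_of_pos (by positivity)]
    nlinarith
  have h3 := condExp_ae_eq_integral_condExpKernel hG hgint
  have h4 := condExp_ae_eq_integral_condExpKernel hG h1int
  have h5 := condExp_ae_eq_integral_condExpKernel hG h2int
  have hκ := aux_ae_indepFun G P hG Λ₁ Λ₂ hΛ₁m hΛ₂m hCondIndep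
  filter_upwards [htower, h3, h4, h5, hκ] with ω htω h3ω h4ω h5ω hκω
  calc (P[fun ω => Set.indicator {ω' | Λ₁ ω' < E₁ ω'} (fun _ => (1 : ℝ)) ω *
        Set.indicator {ω' | Λ₂ ω' < E₂ ω'} (fun _ => (1 : ℝ)) ω | G]) ω
      = ∫ y, Real.exp (-Λ₁ y) * Real.exp (-Λ₂ y) ∂(condExpKernel P G ω) := by
        rw [htω, h3ω]
    _ = (∫ y, Real.exp (-Λ₁ y) ∂(condExpKernel P G ω))
          * ∫ y, Real.exp (-Λ₂ y) ∂(condExpKernel P G ω) := by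
        have hφ : Measurable (fun x : ℝ => Real.exp (-x)) :=
          Real.measurable_exp.comp measurable_neg
        have hind : IndepFun ((fun x : ℝ => Real.exp (-x)) ∘ Λ₁)
            ((fun x : ℝ => Real.exp (-x)) ∘ Λ₂) (condExpKernel P G ω) := hκω.comp hφ hφ
        exact hind.integral_mul_eq_mul_integral
          ((hφ.comp hΛ₁m).aestronglyMeasurable)
          ((hφ.comp hΛ₂m).aestronglyMeasurable)
    _ = (P[fun ω' => Real.exp (-Λ₁ ω') | G]) ω * (P[fun ω' => Real.exp (-Λ₂ ω') | G]) ω := by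
        rw [h4ω, h5ω]

/-- Conditionally-independent-defaults factorization: for two Cox default times with
`𝓗`-measurable integrated intensities `Λ₁, Λ₂` that are conditionally independent given
`𝓖 ⊆ 𝓗`, and independent unit exponential triggers `E₁, E₂` whose pair is independent of `𝓗`,
the joint conditional survival probability factorizes:
`E[1_{Λ₁ < E₁}·1_{Λ₂ < E₂} | 𝓖] = E[exp (−Λ₁) | 𝓖] · E[exp (−Λ₂) | 𝓖]` almost surely. -/
theorem stmt_3 {Ω : Type*} (G H : MeasurableSpace Ω) [mΩ : MeasurableSpace Ω] [StandardBorelSpace Ω]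
    (P : Measure Ω) [IsProbabilityMeasure P]
    (hGH : G ≤ H) (hH : H ≤ mΩ) (hG : G ≤ mΩ)
    (Λ₁ Λ₂ : Ω → ℝ) (hΛ₁meas : Measurable[H] Λ₁) (hΛ₂meas : Measurable[H] Λ₂)
    (hΛ₁0 : ∀ ω, 0 ≤ Λ₁ ω) (hΛ₂0 : ∀ ω, 0 ≤ Λ₂ ω)
    (hCondIndep : CondIndepFun G hG Λ₁ Λ₂ P)
    (E₁ E₂ : Ω → ℝ) (hE₁meas : Measurable E₁) (hE₂meas : Measurable E₂)
    (hE₁0 : ∀ ω, 0 ≤ E₁ ω) (hE₂0 : ∀ ω, 0 ≤ E₂ ω)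
    (hExp₁ : ∀ x : ℝ, 0 ≤ x → P {ω | x < E₁ ω} = ENNReal.ofReal (Real.exp (-x)))
    (hExp₂ : ∀ x : ℝ, 0 ≤ x → P {ω | x < E₂ ω} = ENNReal.ofReal (Real.exp (-x)))
    (hE₁₂ : IndepFun E₁ E₂ P)
    (hIndep : Indep
      (MeasurableSpace.comap (fun ω => (E₁ ω, E₂ ω)) Prod.instMeasurableSpace) H P) :
    P[fun ω => Set.indicator {ω' | Λ₁ ω' < E₁ ω'} (fun _ => (1 : ℝ)) ω *
        Set.indicator {ω' | Λ₂ ω' < E₂ ω'} (fun _ => (1 : ℝ)) ω | G]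
      =ᵐ[P] fun ω =>
        (P[fun ω' => Real.exp (-Λ₁ ω') | G]) ω * (P[fun ω' => Real.exp (-Λ₂ ω') | G]) ω :=
  @aux_main Ω G H mΩ _ P _ hGH hH hG Λ₁ Λ₂ hΛ₁meas hΛ₂meas hΛ₁0 hΛ₂0 hCondIndep
    E₁ E₂ hE₁meas hE₂meas hE₁0 hE₂0 hExp₁ hExp₂ hE₁₂ hIndep
end
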